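/- In the same setting (H a real inner product space of functions X → ℝ with reproducing kernel k; points x₁,…,x_{n+m}; L symmetric positive semidefinite; μ > 0 with μ⁻¹I + LK invertible; modified inner product ⟨f,g⟩_H̃ = ⟨f,g⟩_H + μ·f_Uᵀ L g_U; H̃_r = {f ∈ H : ⟨f,f⟩_H̃ ≤ r²}), the empirical Rademacher complexity on the first n points satisfies the lower bound (1/n)·E_σ[ sup over f ∈ H̃_r of Σᵢ₌₁ⁿ σᵢ·f(xᵢ) ] ≥ (r/(n·√2))·√( Σᵢ₌₁ⁿ [ k(xᵢ,xᵢ) − k_{xᵢ}ᵀ (μ⁻¹I + LK)⁻¹ L k_{xᵢ} ] ), where k_x = (k(x₁,x),…,k(x_{n+m},x))ᵀ and E_σ denotes the expectation over σ = (σ₁,…,σ_n) i.i.d. uniform on {−1,+1}. -/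

import Mathlib

/-!
Write `B f g = ⟪f, g⟫ + μ f_Uᵀ L g_U`. This is a positive semidefinite form on `H`, and evaluation
at `y` is represented for `B` by `k̃_y = k_y - ∑ⱼ cⱼ k_{xⱼ}` with `c = (μ⁻¹ I + L K)⁻¹ L k_y`;
hence `B(k̃_y, k̃_y) = k̃(y, y)`. For a sign vector `σ`, `∑ σᵢ f(xᵢ) = B(f, ∑ σᵢ k̃_{xᵢ})`, whose
supremum over the ball `B(f, f) ≤ r²` is `r ‖∑ σᵢ k̃_{xᵢ}‖_B` by Cauchy–Schwarz.

It remains to prove the Khintchine–Kahane bound `E ‖∑ σᵢ wᵢ‖ ≥ (∑ ‖wᵢ‖²)^{1/2} / √2`. The function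
`F σ = ‖∑ σᵢ wᵢ‖` is even, so its Walsh expansion has no terms of degree one and the Poincaré
inequality on the cube holds with twice the usual constant: `Var F ≤ (1/8) ∑ᵢ E (F - F ∘ flipᵢ)²`.
Flipping `σᵢ` moves `F` by at most `2 ‖wᵢ‖`, so `Var F ≤ (1/2) ∑ ‖wᵢ‖² = (1/2) E F²`, that is
`(E F)² ≥ E F² / 2`.
-/

open Finset Matrix
open scoped RealInnerProductSpace

noncomputable def boolSign (b : Bool) : ℝ := if b then 1 else -1

lemma boolSign_mul_self (b : Bool) : boolSign b * boolSign b = 1 := by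
  cases b <;> simp [boolSign]

lemma boolSign_not (b : Bool) : boolSign (!b) = -boolSign b := by
  cases b <;> simp [boolSign]

lemma Fintype.sum_eq_zero_of_comp_eq_neg {α : Type*} [Fintype α] {e : α → α}
    (he : Function.Bijective e) {g : α → ℝ} (hg : ∀ a, g (e a) = -g a) : ∑ a, g a = 0 := by
  have := he.sum_comp g
  simp only [hg, sum_neg_distrib] at this
  linarith

namespace BooleanCube

variable {ι : Type*}

noncomputable def walsh (A : Finset ι) (s : ι → Bool) : ℝ := ∏ i ∈ A, boolSign (s i)

lemma walsh_not (A : Finset ι) (s : ι → Bool) :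
    walsh A (fun j => !s j) = (-1) ^ #A * walsh A s := by
  simp only [walsh, boolSign_not, prod_neg]

variable [DecidableEq ι]

def flipAt (i : ι) (s : ι → Bool) : ι → Bool := Function.update s i (!s i)

@[simp] lemma flipAt_apply_self (i : ι) (s : ι → Bool) : flipAt i s i = !s i := by
  simp [flipAt]

@[simp] lemma flipAt_apply_of_ne {i j : ι} (h : j ≠ i) (s : ι → Bool) : flipAt i s j = s j := by
  simp [flipAt, h]

lemma flipAt_involutive (i : ι) : Function.Involutive (flipAt i) := by
  intro s
  simp [flipAt]

lemma walsh_flipAt (A : Finset ι) (i : ι) (s : ι → Bool) :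
    walsh A (flipAt i s) = (if i ∈ A then -1 else 1) * walsh A s := by
  unfold walsh
  split_ifs with hi
  · rw [← mul_prod_erase A _ hi, ← mul_prod_erase A _ hi, flipAt_apply_self, boolSign_not,
      prod_congr rfl fun j hj => by rw [flipAt_apply_of_ne (ne_of_mem_erase hj)]]
    ring
  · rw [one_mul]
    exact prod_congr rfl fun j hj => by rw [flipAt_apply_of_ne (ne_of_mem_of_not_mem hj hi)]

variable [Fintype ι]

lemma sum_walsh_mul_walsh (s t : ι → Bool) :
    ∑ A : Finset ι, walsh A s * walsh A t = if s = t then 2 ^ Fintype.card ι else 0 := by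
  have hprod : ∑ A : Finset ι, walsh A s * walsh A t
      = ∏ i, (boolSign (s i) * boolSign (t i) + 1) := by
    simp only [prod_add, prod_const_one, mul_one, powerset_univ, walsh, ← prod_mul_distrib]
  rw [hprod]
  split_ifs with h
  · simp [h, boolSign_mul_self, one_add_one_eq_two]
  · obtain ⟨i, hi⟩ := Function.ne_iff.1 h
    refine prod_eq_zero (mem_univ i) ?_
    cases hs : s i <;> cases ht : t i <;> simp_all [boolSign]

noncomputable def walshCoeff (f : (ι → Bool) → ℝ) (A : Finset ι) : ℝ :=
  ∑ s, f s * walsh A s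

lemma sum_walshCoeff_sq (f : (ι → Bool) → ℝ) :
    ∑ A, walshCoeff f A ^ 2 = 2 ^ Fintype.card ι * ∑ s, f s ^ 2 := by
  calc ∑ A, walshCoeff f A ^ 2
      = ∑ A : Finset ι, ∑ s, ∑ t, f s * f t * (walsh A s * walsh A t) := by
        simp only [walshCoeff, sq, sum_mul_sum, mul_mul_mul_comm]
    _ = ∑ s, ∑ t, f s * f t * ∑ A : Finset ι, walsh A s * walsh A t := by
        rw [sum_comm]
        exact sum_congr rfl fun s _ => by rw [sum_comm]; simp only [mul_sum]
    _ = 2 ^ Fintype.card ι * ∑ s, f s ^ 2 := by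
        simp [sum_walsh_mul_walsh, mul_sum, sq, mul_comm]

lemma walshCoeff_empty (f : (ι → Bool) → ℝ) : walshCoeff f ∅ = ∑ s, f s := by
  simp [walshCoeff, walsh]

lemma walshCoeff_eq_zero_of_odd {f : (ι → Bool) → ℝ} (heven : ∀ s, f (fun j => !s j) = f s)
    {A : Finset ι} (hA : Odd #A) : walshCoeff f A = 0 :=
  Fintype.sum_eq_zero_of_comp_eq_neg (e := fun s j => !s j)
    (Function.Involutive.bijective fun s => by simp)
    fun s => by rw [heven, walsh_not, hA.neg_one_pow]; ring

lemma two_mul_walshCoeff_sq_le {f : (ι → Bool) → ℝ} (heven : ∀ s, f (fun j => !s j) = f s)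
    {A : Finset ι} (hA : A ≠ ∅) : 2 * walshCoeff f A ^ 2 ≤ #A * walshCoeff f A ^ 2 := by
  rcases (Nat.one_le_iff_ne_zero.2 (card_ne_zero.2 (nonempty_iff_ne_empty.2 hA))).eq_or_lt
    with h1 | h2
  · simp [walshCoeff_eq_zero_of_odd heven (h1 ▸ odd_one)]
  · gcongr
    exact_mod_cast h2

lemma walshCoeff_sub_comp_flipAt (f : (ι → Bool) → ℝ) (i : ι) (A : Finset ι) :
    walshCoeff (fun s => f s - f (flipAt i s)) A = if i ∈ A then 2 * walshCoeff f A else 0 := by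
  have hflip : ∑ s, f (flipAt i s) * walsh A s = (if i ∈ A then -1 else 1) * walshCoeff f A := by
    rw [← (flipAt_involutive i).bijective.sum_comp, walshCoeff, mul_sum]
    refine sum_congr rfl fun s _ => ?_
    rw [flipAt_involutive i s, walsh_flipAt]
    ring
  simp only [walshCoeff, sub_mul, sum_sub_distrib] at hflip ⊢
  rw [hflip]
  split_ifs <;> ring

theorem poincare_of_even {f : (ι → Bool) → ℝ} (heven : ∀ s, f (fun j => !s j) = f s) :
    8 * (2 ^ Fintype.card ι * ∑ s, f s ^ 2 - (∑ s, f s) ^ 2)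
      ≤ 2 ^ Fintype.card ι * ∑ i, ∑ s, (f s - f (flipAt i s)) ^ 2 := by
  have hdiff : 2 ^ Fintype.card ι * ∑ i, ∑ s, (f s - f (flipAt i s)) ^ 2
      = ∑ A, 4 * #A * walshCoeff f A ^ 2 := by
    have parseval := fun i => sum_walshCoeff_sq fun s => f s - f (flipAt i s)
    simp only [walshCoeff_sub_comp_flipAt] at parseval
    rw [mul_sum]
    simp only [← parseval]
    rw [sum_comm]
    refine sum_congr rfl fun A _ => ?_
    simp only [ite_pow, zero_pow two_ne_zero, sum_ite_mem, univ_inter, sum_const, nsmul_eq_mul]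
    ring
  rw [← sum_walshCoeff_sq, ← walshCoeff_empty, hdiff, ← add_sum_erase _ _ (mem_univ ∅),
    ← add_sum_erase _ _ (mem_univ ∅), add_sub_cancel_left, mul_sum]
  simp only [card_empty, CharP.cast_eq_zero, mul_zero, zero_mul, zero_add]
  refine sum_le_sum fun A hA => ?_
  linarith [two_mul_walshCoeff_sq_le heven (ne_of_mem_erase hA)]

lemma sum_boolSign_mul_boolSign (i j : ι) :
    ∑ s : ι → Bool, boolSign (s i) * boolSign (s j) = if i = j then 2 ^ Fintype.card ι else 0 := by
  split_ifs with h
  · simp [h, boolSign_mul_self]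
  · refine Fintype.sum_eq_zero_of_comp_eq_neg (flipAt_involutive i).bijective fun s => ?_
    rw [flipAt_apply_self, flipAt_apply_of_ne (Ne.symm h), boolSign_not, neg_mul]

end BooleanCube

open BooleanCube
open LinearMap (BilinForm)

section SignedSum

variable {E : Type*} [AddCommGroup E] [Module ℝ E] {ι : Type*} [Fintype ι]

noncomputable def signedSum (w : ι → E) (s : ι → Bool) : E := ∑ i, boolSign (s i) • w i

lemma signedSum_not (w : ι → E) (s : ι → Bool) :
    signedSum w (fun j => !s j) = -signedSum w s := by
  simp [signedSum, boolSign_not]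

lemma signedSum_sub_signedSum_flipAt [DecidableEq ι] (w : ι → E) (i : ι) (s : ι → Bool) :
    signedSum w s - signedSum w (flipAt i s) = (2 * boolSign (s i)) • w i := by
  rw [signedSum, signedSum, ← sum_sub_distrib, sum_eq_single i]
  · rw [flipAt_apply_self, boolSign_not, ← sub_smul]
    congr 1
    ring
  · intro j _ hj
    rw [flipAt_apply_of_ne hj, sub_self]
  · simp

end SignedSum

namespace LinearMap.BilinForm

variable {E : Type*} [AddCommGroup E] [Module ℝ E] {B : BilinForm ℝ E}

lemma IsPosSemidef.apply_le_sqrt_mul_sqrt (hB : B.IsPosSemidef) (a b : E) :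
    B a b ≤ √(B a a) * √(B b b) := by
  rw [← Real.sqrt_mul (hB.nonneg a)]
  exact Real.le_sqrt_of_sq_le (apply_sq_le_of_symm B hB.nonneg (isSymm_iff.1 hB.isSymm) a b)

lemma IsPosSemidef.sq_sqrt_sub_sqrt_le (hB : B.IsPosSemidef) (a b : E) :
    (√(B a a) - √(B b b)) ^ 2 ≤ B (a - b) (a - b) := by
  have hexpand : B (a - b) (a - b) = B a a - 2 * B a b + B b b := by
    simp only [map_sub, LinearMap.sub_apply, hB.isSymm.eq b a]
    ring
  rw [hexpand, sub_sq, Real.sq_sqrt (hB.nonneg a), Real.sq_sqrt (hB.nonneg b)]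
  linarith [hB.apply_le_sqrt_mul_sqrt a b]

lemma IsPosSemidef.mul_sqrt_le_sSup (hB : B.IsPosSemidef) {r : ℝ} (hr : 0 ≤ r) (w : E) :
    r * √(B w w) ≤ sSup {v | ∃ f, B f f ≤ r ^ 2 ∧ v = B f w} := by
  have hbdd : BddAbove {v | ∃ f, B f f ≤ r ^ 2 ∧ v = B f w} := by
    refine ⟨r * √(B w w), ?_⟩
    rintro _ ⟨f, hf, rfl⟩
    calc B f w ≤ √(B f f) * √(B w w) := hB.apply_le_sqrt_mul_sqrt f w
      _ ≤ r * √(B w w) := by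
        gcongr
        exact (Real.sqrt_le_sqrt hf).trans_eq (Real.sqrt_sq hr)
  refine le_csSup hbdd ?_
  rcases (hB.nonneg w).eq_or_lt with hQ | hQ
  · exact ⟨0, by simp [sq_nonneg], by simp [← hQ]⟩
  · have hsq : √(B w w) ^ 2 = B w w := Real.sq_sqrt hQ.le
    have hpos : 0 < √(B w w) := Real.sqrt_pos.2 hQ
    refine ⟨(r / √(B w w)) • w, le_of_eq ?_, ?_⟩
    all_goals
      simp only [map_smul, LinearMap.smul_apply, smul_eq_mul]
      field_simp
      rw [hsq]

variable {ι : Type*} [Fintype ι]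

lemma apply_signedSum (B : BilinForm ℝ E) (f : E) (w : ι → E) (s : ι → Bool) :
    B f (signedSum w s) = ∑ i, boolSign (s i) * B f (w i) := by
  simp [signedSum]

variable [DecidableEq ι]

lemma sum_apply_signedSum_self (B : BilinForm ℝ E) (w : ι → E) :
    ∑ s, B (signedSum w s) (signedSum w s) = 2 ^ Fintype.card ι * ∑ i, B (w i) (w i) := by
  calc ∑ s, B (signedSum w s) (signedSum w s)
      = ∑ j, ∑ i, (∑ s : ι → Bool, boolSign (s j) * boolSign (s i)) * B (w i) (w j) := by
        simp only [signedSum, map_sum, map_smul, LinearMap.sum_apply, LinearMap.smul_apply,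
          smul_eq_mul, mul_sum, sum_mul]
        rw [sum_comm]
        refine sum_congr rfl fun j _ => ?_
        rw [sum_comm]
        exact sum_congr rfl fun i _ => sum_congr rfl fun s _ => by ring
    _ = 2 ^ Fintype.card ι * ∑ i, B (w i) (w i) := by
        simp [sum_boolSign_mul_boolSign, mul_sum]

theorem IsPosSemidef.khintchine (hB : B.IsPosSemidef) (w : ι → E) :
    √(∑ i, B (w i) (w i)) / √2
      ≤ 1 / 2 ^ Fintype.card ι * ∑ s, √(B (signedSum w s) (signedSum w s)) := by
  set N : ℝ := 2 ^ Fintype.card ι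
  have hN : 0 < N := by positivity
  set f : (ι → Bool) → ℝ := fun s => √(B (signedSum w s) (signedSum w s))
  set T := ∑ i, B (w i) (w i)
  have hT : 0 ≤ T := sum_nonneg fun i _ => hB.nonneg (w i)
  have heven : ∀ s, f (fun j => !s j) = f s := fun s => by
    simp only [f, signedSum_not, map_neg, LinearMap.neg_apply, neg_neg]
  have hsq : ∑ s, f s ^ 2 = N * T := by
    simp only [f, Real.sq_sqrt (hB.nonneg _), sum_apply_signedSum_self]
    rfl
  have hflip : ∀ i s, (f s - f (flipAt i s)) ^ 2 ≤ 4 * B (w i) (w i) := fun i s => by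
    have := hB.sq_sqrt_sub_sqrt_le (signedSum w s) (signedSum w (flipAt i s))
    rw [signedSum_sub_signedSum_flipAt, map_smul, map_smul, LinearMap.smul_apply, smul_eq_mul,
      smul_eq_mul, ← mul_assoc, mul_mul_mul_comm, boolSign_mul_self] at this
    linarith
  have hflips : ∑ i, ∑ s, (f s - f (flipAt i s)) ^ 2 ≤ N * (4 * T) := by
    calc ∑ i, ∑ s, (f s - f (flipAt i s)) ^ 2
        ≤ ∑ i, ∑ _s : ι → Bool, 4 * B (w i) (w i) :=
          sum_le_sum fun i _ => sum_le_sum fun s _ => hflip i s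
      _ = N * (4 * T) := by simp [N, T, mul_sum]
  have hmean : N * N * T / 2 ≤ (∑ s, f s) ^ 2 := by
    nlinarith [poincare_of_even heven]
  rw [← Real.sqrt_div hT]
  refine Real.sqrt_le_iff.2 ⟨by positivity, ?_⟩
  rw [mul_pow, div_pow, one_pow, div_mul_eq_mul_div, one_mul, le_div_iff₀ (by positivity)]
  nlinarith

end LinearMap.BilinForm

section ManifoldRegularization

variable {H : Type*} [NormedAddCommGroup H] [InnerProductSpace ℝ H] {ι : Type*}

noncomputable def innerSample (φ : ι → H) : H →ₗ[ℝ] ι → ℝ := LinearMap.pi fun i => innerₗ H (φ i)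

@[simp] lemma innerSample_apply (φ : ι → H) (f : H) (i : ι) : innerSample φ f i = ⟪φ i, f⟫ := rfl

variable [Fintype ι]

lemma innerSample_sum_smul (φ : ι → H) (c : ι → ℝ) :
    innerSample φ (∑ j, c j • φ j) = gram ℝ φ *ᵥ c := by
  ext i
  simp [mulVec, dotProduct, gram_apply, inner_sum, real_inner_smul_right, mul_comm]

variable [DecidableEq ι]

noncomputable def regularizedForm (S : H →ₗ[ℝ] ι → ℝ) (L : Matrix ι ι ℝ) (μ : ℝ) :
    BilinForm ℝ H :=
  innerₗ H + μ • (toBilin' L).compl₁₂ S S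

lemma regularizedForm_apply (S : H →ₗ[ℝ] ι → ℝ) (L : Matrix ι ι ℝ) (μ : ℝ) (f g : H) :
    regularizedForm S L μ f g = ⟪f, g⟫ + μ * (S f ⬝ᵥ L *ᵥ S g) := by
  simp [regularizedForm, toBilin'_apply']

lemma isPosSemidef_regularizedForm (S : H →ₗ[ℝ] ι → ℝ) {L : Matrix ι ι ℝ} (hL : L.PosSemidef)
    {μ : ℝ} (hμ : 0 ≤ μ) : (regularizedForm S L μ).IsPosSemidef := by
  refine ⟨⟨fun f g => ?_⟩, ⟨fun f => ?_⟩⟩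
  · have hLT : Lᵀ = L := by simpa [conjTranspose_eq_transpose_of_trivial] using hL.isHermitian.eq
    rw [regularizedForm_apply, regularizedForm_apply, real_inner_comm, dotProduct_mulVec,
      dotProduct_comm, ← mulVec_transpose, hLT]
  · have hquad := hL.dotProduct_mulVec_nonneg (S f)
    rw [star_trivial] at hquad
    rw [regularizedForm_apply]
    exact add_nonneg real_inner_self_nonneg (mul_nonneg hμ hquad)

noncomputable def regularizedRepresenter (φ : ι → H) (L : Matrix ι ι ℝ) (μ : ℝ) (g : H) : H :=
  g - ∑ j, ((μ⁻¹ • 1 + L * gram ℝ φ)⁻¹ *ᵥ (L *ᵥ innerSample φ g)) j • φ j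

variable {φ : ι → H} {L : Matrix ι ι ℝ} {μ : ℝ}

lemma regularizedForm_regularizedRepresenter (hμ : μ ≠ 0)
    (hM : IsUnit (μ⁻¹ • 1 + L * gram ℝ φ)) (f g : H) :
    regularizedForm (innerSample φ) L μ f (regularizedRepresenter φ L μ g) = ⟪f, g⟫ := by
  rw [regularizedRepresenter]
  set c := (μ⁻¹ • 1 + L * gram ℝ φ)⁻¹ *ᵥ (L *ᵥ innerSample φ g)
  have hMc : (μ⁻¹ • 1 + L * gram ℝ φ) *ᵥ c = L *ᵥ innerSample φ g := by
    rw [mulVec_mulVec, mul_nonsing_inv _ ((isUnit_iff_isUnit_det _).1 hM), one_mulVec]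
  have hc : μ • (L *ᵥ (innerSample φ g - gram ℝ φ *ᵥ c)) = c := by
    rw [add_mulVec, smul_mulVec, one_mulVec, ← mulVec_mulVec] at hMc
    rw [mulVec_sub, ← hMc, add_sub_cancel_right, smul_smul, mul_inv_cancel₀ hμ, one_smul]
  have hinner : ⟪f, ∑ j, c j • φ j⟫ = innerSample φ f ⬝ᵥ c := by
    simp [inner_sum, real_inner_smul_right, dotProduct, real_inner_comm, mul_comm]
  have hpenalty : μ * (innerSample φ f ⬝ᵥ L *ᵥ (innerSample φ g - gram ℝ φ *ᵥ c))
      = innerSample φ f ⬝ᵥ c := by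
    conv_rhs => rw [← hc]
    rw [dotProduct_smul, smul_eq_mul]
  rw [regularizedForm_apply, map_sub, innerSample_sum_smul, inner_sub_right, hinner, hpenalty,
    sub_add_cancel]

lemma regularizedForm_regularizedRepresenter_self (hμ : μ ≠ 0)
    (hM : IsUnit (μ⁻¹ • 1 + L * gram ℝ φ)) (g : H) :
    regularizedForm (innerSample φ) L μ (regularizedRepresenter φ L μ g)
        (regularizedRepresenter φ L μ g) =
      ⟪g, g⟫ - innerSample φ g ⬝ᵥ (μ⁻¹ • 1 + L * gram ℝ φ)⁻¹ *ᵥ (L *ᵥ innerSample φ g) := by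
  rw [regularizedForm_regularizedRepresenter hμ hM, regularizedRepresenter, inner_sub_left,
    sum_inner]
  simp [real_inner_smul_left, dotProduct, mul_comm]

end ManifoldRegularization

theorem stmt17_general {H X : Type*} [NormedAddCommGroup H] [InnerProductSpace ℝ H]
    (ev : H →ₗ[ℝ] X → ℝ)
    (k : X → X → ℝ) (Krep : X → H)
    (hmem : ∀ y, ev (Krep y) = fun z => k z y)
    (hrep : ∀ (y : X) (f : H), ⟪Krep y, f⟫ = ev f y)
    (n m : ℕ) (x : Fin (n + m) → X)
    (L : Matrix (Fin (n + m)) (Fin (n + m)) ℝ) (hL : L.PosSemidef)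
    (μ : ℝ) (hμ : 0 < μ)
    (K : Matrix (Fin (n + m)) (Fin (n + m)) ℝ) (hK : ∀ i j, K i j = k (x i) (x j))
    (M : Matrix (Fin (n + m)) (Fin (n + m)) ℝ)
    (hM : M = μ⁻¹ • (1 : Matrix (Fin (n + m)) (Fin (n + m)) ℝ) + L * K)
    (hMinv : IsUnit M)
    (fU : H → Fin (n + m) → ℝ) (hfU : ∀ f i, fU f i = ev f (x i))
    (kvec : X → Fin (n + m) → ℝ) (hkvec : ∀ y i, kvec y i = k (x i) y)
    (r : ℝ) (hr : 0 < r) :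
    (1 / n : ℝ) * ((1 / 2 ^ n : ℝ) * ∑ s : Fin n → Bool,
        sSup {v : ℝ | ∃ f : H, ⟪f, f⟫ + μ * (fU f ⬝ᵥ L *ᵥ fU f) ≤ r ^ 2 ∧
          v = ∑ i : Fin n, (if s i then (1 : ℝ) else -1) * ev f (x (Fin.castAdd m i))}) ≥
      (r / (n * Real.sqrt 2)) * Real.sqrt (∑ i : Fin n,
        (k (x (Fin.castAdd m i)) (x (Fin.castAdd m i)) -
          kvec (x (Fin.castAdd m i)) ⬝ᵥ M⁻¹ *ᵥ (L *ᵥ kvec (x (Fin.castAdd m i))))) := by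
  have hk : ∀ a b, k a b = ⟪Krep a, Krep b⟫ := fun a b => by rw [hrep, hmem]
  have hrep_right : ∀ y f, ⟪f, Krep y⟫ = ev f y := fun y f => by rw [real_inner_comm, hrep]
  set φ := fun i => Krep (x i)
  obtain rfl : fU = innerSample φ := by ext f i; rw [hfU, innerSample_apply, hrep]
  obtain rfl : kvec = fun y => innerSample φ (Krep y) := by
    ext y i; rw [hkvec, innerSample_apply, hk]
  obtain rfl : K = gram ℝ φ := by ext i j; rw [hK, gram_apply, hk]
  subst hM
  set B := regularizedForm (innerSample φ) L μ
  have hB : B.IsPosSemidef := isPosSemidef_regularizedForm _ hL hμ.le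
  set g : Fin n → H := fun i => regularizedRepresenter φ L μ (Krep (x (Fin.castAdd m i)))
  have hball : ∀ s : Fin n → Bool,
      {v : ℝ | ∃ f : H, ⟪f, f⟫ + μ * (innerSample φ f ⬝ᵥ L *ᵥ innerSample φ f) ≤ r ^ 2 ∧
          v = ∑ i : Fin n, (if s i then (1 : ℝ) else -1) * ev f (x (Fin.castAdd m i))}
        = {v | ∃ f, B f f ≤ r ^ 2 ∧ v = B f (signedSum g s)} := fun s => by
    simp only [B, g, regularizedForm_apply, BilinForm.apply_signedSum,
      regularizedForm_regularizedRepresenter hμ.ne' hMinv, hrep_right, boolSign]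
  have hdiag : ∀ i, k (x (Fin.castAdd m i)) (x (Fin.castAdd m i)) -
      innerSample φ (Krep (x (Fin.castAdd m i))) ⬝ᵥ (μ⁻¹ • 1 + L * gram ℝ φ)⁻¹ *ᵥ
        (L *ᵥ innerSample φ (Krep (x (Fin.castAdd m i)))) = B (g i) (g i) := fun i => by
    rw [regularizedForm_regularizedRepresenter_self hμ.ne' hMinv, hk]
  simp only [hball, hdiag]
  calc r / (n * √2) * √(∑ i, B (g i) (g i))
      = 1 / n * (r * (√(∑ i, B (g i) (g i)) / √2)) := by ring
    _ ≤ 1 / n * (r * (1 / 2 ^ n * ∑ s, √(B (signedSum g s) (signedSum g s)))) := by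
      gcongr
      simpa using hB.khintchine g
    _ ≤ 1 / n * (1 / 2 ^ n * ∑ s, sSup {v | ∃ f, B f f ≤ r ^ 2 ∧ v = B f (signedSum g s)}) := by
      rw [mul_left_comm r, mul_sum]
      gcongr with s
      exact hB.mul_sqrt_le_sSup hr.le _

/-- Lower bound (via Khintchine–Kahane) on the empirical Rademacher complexity of the manifold-regularized ball
`H̃_r = {f | ⟨f,f⟩ + μ f_Uᵀ L f_U ≤ r²}`, measured on the first `n` of the `n + m` points:
`Rad_n(H̃_r) ≥ (r/(n√2)) √(Σᵢ₌₁ⁿ [k(xᵢ,xᵢ) - k_{xᵢ}ᵀ (μ⁻¹ I + L K)⁻¹ L k_{xᵢ}])`. -/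
theorem stmt17 {H X : Type*} [NormedAddCommGroup H] [InnerProductSpace ℝ H]
    (ev : H →ₗ[ℝ] X → ℝ) (hev : Function.Injective ev)
    (k : X → X → ℝ) (Krep : X → H)
    (hmem : ∀ y, ev (Krep y) = fun z => k z y)
    (hrep : ∀ (y : X) (f : H), ⟪Krep y, f⟫ = ev f y)
    (n m : ℕ) (hn : 0 < n) (x : Fin (n + m) → X)
    (L : Matrix (Fin (n + m)) (Fin (n + m)) ℝ) (hL : L.PosSemidef)
    (μ : ℝ) (hμ : 0 < μ)
    (K : Matrix (Fin (n + m)) (Fin (n + m)) ℝ) (hK : ∀ i j, K i j = k (x i) (x j))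
    (M : Matrix (Fin (n + m)) (Fin (n + m)) ℝ)
    (hM : M = μ⁻¹ • (1 : Matrix (Fin (n + m)) (Fin (n + m)) ℝ) + L * K)
    (hMinv : IsUnit M)
    (fU : H → Fin (n + m) → ℝ) (hfU : ∀ f i, fU f i = ev f (x i))
    (kvec : X → Fin (n + m) → ℝ) (hkvec : ∀ y i, kvec y i = k (x i) y)
    (r : ℝ) (hr : 0 < r) :
    (1 / n : ℝ) * ((1 / 2 ^ n : ℝ) * ∑ s : Fin n → Bool,
        sSup {v : ℝ | ∃ f : H, ⟪f, f⟫ + μ * (fU f ⬝ᵥ L *ᵥ fU f) ≤ r ^ 2 ∧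
          v = ∑ i : Fin n, (if s i then (1 : ℝ) else -1) * ev f (x (Fin.castAdd m i))}) ≥
      (r / (n * Real.sqrt 2)) * Real.sqrt (∑ i : Fin n,
        (k (x (Fin.castAdd m i)) (x (Fin.castAdd m i)) -
          kvec (x (Fin.castAdd m i)) ⬝ᵥ M⁻¹ *ᵥ (L *ᵥ kvec (x (Fin.castAdd m i))))) :=
  stmt17_general ev k Krep hmem hrep n m x L hL μ hμ K hK M hM hMinv fU hfU kvec hkvec r hr
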